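/- Let F be a field, U ∈ F^{n×n} an invertible upper-triangular matrix, and 𝓡 ∈ F^{n×n} any matrix. Set E = U^{−1} − 𝓡 and let J be a subset of {1,…,n} containing ColSupport(E), with selection matrix P ∈ F^{n×c}. Then T = Pᵀ·U·P is invertible and E·P = (I − 𝓡·U)·P·T^{−1}. -/

import Mathlib

open Matrix

/-- The selection matrix `P ∈ F^{n×c}` of a subset `J ⊆ {1,…,n}` with `|J| = c`:
its columns are the standard basis vectors indexed by `J` in increasing order. -/
def selectionMatrix (F : Type*) [Zero F] [One F] {n c : ℕ}
    (J : Finset (Fin n)) (hc : J.card = c) : Matrix (Fin n) (Fin c) F :=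
  Matrix.of fun i k => if i = (J.orderIsoOfFin hc k : Fin n) then 1 else 0

/-!
Since `E * U = 1 - 𝓡 * U`, the identity reads `E * P = E * U * P * T⁻¹`. The columns of `E`
vanish outside `J` and `P * Pᵀ` is the diagonal indicator of `J`, so `E = E * P * Pᵀ` and hence
`E * U * P = E * P * (Pᵀ * U * P) = E * P * T`. Finally `T` is the principal submatrix of `U` on
the indices in `J`; since the enumeration of `J` is increasing, `T` is again upper triangular with
its diagonal taken from that of `U`, so it is invertible.
-/

namespace Matrix
variable {R : Type*} {m k : Type*}

theorem IsUpperTriangular.submatrix_of_strictMono [Zero R] [Preorder m] [Preorder k]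
    {M : Matrix m m R} (h : M.IsUpperTriangular) {f : k → m} (hf : StrictMono f) :
    (M.submatrix f f).IsUpperTriangular :=
  fun _ _ hij => h (hf hij)

theorem IsUpperTriangular.isUnit_det_submatrix [CommRing R] [Fintype m] [DecidableEq m]
    [LinearOrder m] [Fintype k] [DecidableEq k] [LinearOrder k]
    {M : Matrix m m R} (h : M.IsUpperTriangular) (hM : IsUnit M.det) {f : k → m}
    (hf : StrictMono f) : IsUnit (M.submatrix f f).det := by
  rw [det_of_isUpperTriangular h, IsUnit.prod_univ_iff] at hM
  rw [det_of_isUpperTriangular (h.submatrix_of_strictMono hf), IsUnit.prod_univ_iff]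
  exact fun i => hM (f i)

theorem mul_eq_mul_mul_mul_inv_of_mul_mul_eq [CommRing R] [Fintype m] [DecidableEq m]
    [Fintype k] [DecidableEq k] {E U : Matrix m m R} {P : Matrix m k R} {Q : Matrix k m R}
    (hEPQ : E * P * Q = E) (hT : IsUnit (Q * U * P).det) :
    E * P = E * U * P * (Q * U * P)⁻¹ := by
  calc E * P = E * P * (Q * U * P) * (Q * U * P)⁻¹ := (mul_nonsing_inv_cancel_right _ _ hT).symm
    _ = E * P * Q * U * P * (Q * U * P)⁻¹ := by simp only [Matrix.mul_assoc]
    _ = E * U * P * (Q * U * P)⁻¹ := by rw [hEPQ]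

end Matrix

theorem Finset.sum_orderEmbOfFin {M : Type*} [AddCommMonoid M] {n c : ℕ} (J : Finset (Fin n))
    (hc : J.card = c) (g : Fin n → M) :
    ∑ k, g (J.orderEmbOfFin hc k) = ∑ x ∈ J, g x := by
  conv_rhs => rw [← J.map_orderEmbOfFin_univ hc, Finset.sum_map]
  rfl

section selectionMatrix
variable {R : Type*} [Semiring R] {n c : ℕ} (J : Finset (Fin n)) (hc : J.card = c)

theorem selectionMatrix_eq_submatrix_one :
    selectionMatrix R J hc = (1 : Matrix (Fin n) (Fin n) R).submatrix id (J.orderEmbOfFin hc) := by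
  ext i k
  simp only [selectionMatrix, of_apply, submatrix_apply, id, one_apply,
    Finset.coe_orderIsoOfFin_apply]
  rfl

theorem transpose_selectionMatrix_mul_mul_selectionMatrix (M : Matrix (Fin n) (Fin n) R) :
    (selectionMatrix R J hc)ᵀ * M * selectionMatrix R J hc =
      M.submatrix (J.orderEmbOfFin hc) (J.orderEmbOfFin hc) := by
  ext k l
  simp [selectionMatrix_eq_submatrix_one, mul_apply, one_apply]

theorem selectionMatrix_mul_transpose :
    selectionMatrix R J hc * (selectionMatrix R J hc)ᵀ =
      diagonal fun i => if i ∈ J then 1 else 0 := by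
  ext i j
  calc (selectionMatrix R J hc * (selectionMatrix R J hc)ᵀ) i j
      = ∑ x ∈ J, (if i = x then 1 else 0) * (if j = x then 1 else 0) :=
        J.sum_orderEmbOfFin hc fun x => (if i = x then (1 : R) else 0) * (if j = x then 1 else 0)
    _ = diagonal (fun i => if i ∈ J then 1 else 0) i j := by
        by_cases hij : i = j <;> simp [hij]

theorem mul_selectionMatrix_mul_transpose {m : Type*} (M : Matrix m (Fin n) R)
    (hM : ∀ i, ∀ j ∉ J, M i j = 0) :
    M * selectionMatrix R J hc * (selectionMatrix R J hc)ᵀ = M := by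
  ext i j
  rw [Matrix.mul_assoc, selectionMatrix_mul_transpose, mul_diagonal]
  by_cases hj : j ∈ J
  · simp [hj]
  · simp [hj, hM i j hj]

end selectionMatrix

/-- the correctness identity of the TrInvEC algorithm: for `U` invertible
upper-triangular, `𝓡` an approximate inverse, `E = U⁻¹ − 𝓡`, and `J ⊇ ColSupport(E)`
with selection matrix `P`, the matrix `T = Pᵀ·U·P` is invertible and
`E·P = (I − 𝓡·U)·P·T⁻¹`. -/
theorem trinv_error_blackbox_identity {F : Type*} [Field F] {n c : ℕ}
    (U : Matrix (Fin n) (Fin n) F)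
    (hU : ∀ i j, j < i → U i j = 0) (hUinv : IsUnit U.det)
    (𝓡 E : Matrix (Fin n) (Fin n) F) (hE : E = U⁻¹ - 𝓡)
    (J : Finset (Fin n)) (hc : J.card = c)
    (hsupp : ∀ j : Fin n, (∃ i, E i j ≠ 0) → j ∈ J) :
    IsUnit ((selectionMatrix F J hc)ᵀ * U * selectionMatrix F J hc).det ∧
    E * selectionMatrix F J hc =
      (1 - 𝓡 * U) * selectionMatrix F J hc *
        ((selectionMatrix F J hc)ᵀ * U * selectionMatrix F J hc)⁻¹ := by
  have hT : IsUnit ((selectionMatrix F J hc)ᵀ * U * selectionMatrix F J hc).det := by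
    rw [transpose_selectionMatrix_mul_mul_selectionMatrix]
    exact IsUpperTriangular.isUnit_det_submatrix (fun i j hij => hU i j hij) hUinv
      (J.orderEmbOfFin hc).strictMono
  have hEPP : E * selectionMatrix F J hc * (selectionMatrix F J hc)ᵀ = E :=
    mul_selectionMatrix_mul_transpose J hc E fun i j hj =>
      not_not.mp fun h => hj (hsupp j ⟨i, h⟩)
  have hEU : E * U = 1 - 𝓡 * U := by rw [hE, sub_mul, nonsing_inv_mul U hUinv]
  exact ⟨hT, hEU ▸ mul_eq_mul_mul_mul_inv_of_mul_mul_eq hEPP hT⟩
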